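/- arXiv:2409.01977 — 4 statements merged into one kernel-verified Lean document; each statement's English description precedes it below -/
import Mathlib

section
/- The excess risk of the optimal counterfactually fair regressor equals the variance of A times the expected squared group gap: under a structural model where X = F(U, A) with F(·, a) invertible, A ∈ {0,1} independent of U with P(A=1) = π, and the fair predictor φ_CF(x,a) = P(A=a)·φ*(x,a) + P(A=1-a)·φ*(x_{1-a}, 1-a) with φ*(x,a) = E[Y|X=x, A=a], one has E[(φ_CF(X,A) - Y)²] - E[(φ*(X,A) - Y)²] = π(1-π)·E_U[(E[Y|U, A=1] - E[Y|U, A=0])²]. -/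
/-!
Write `g u = φ*(F(u,1),1)` and `h u = φ*(F(u,0),0)`, so that `φ*(X,A) = g U` on `{A = 1}` and
`h U` on `{A = 0}`, while the fair predictor is the mixture `π g U + (1 - π) h U`. Since `F(·,a)`
is injective, `(X,A)` and `(U,A)` generate the same σ-algebra, so the gap between the fair
predictor and `φ*(X,A) = E[Y | X, A]` is `(X,A)`-measurable and hence orthogonal to the
residual `φ*(X,A) - Y`: the excess risk is the mean square of that gap. The gap equals
`(1 - π)(h U - g U)` on `{A = 1}` and `π(g U - h U)` on `{A = 0}`, and by independence of `U`
and `A` its mean square is `((1 - π)² π + π² (1 - π)) E[(g U - h U)²] = π(1 - π) E[(g U - h U)²]`.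
-/

open MeasureTheory ProbabilityTheory

section Orthogonality

variable {Ω : Type*} {m m0 : MeasurableSpace Ω} {μ : Measure Ω} [IsFiniteMeasure μ] {Y : Ω → ℝ}

theorem integral_mul_condExp_sub_eq_zero (hm : m ≤ m0) {Z : Ω → ℝ} (hZ : StronglyMeasurable[m] Z)
    (hZ2 : MemLp Z 2 μ) (hY : MemLp Y 2 μ) :
    ∫ ω, Z ω * (μ[Y|m] ω - Y ω) ∂μ = 0 := by
  have hZY : Integrable (Z * Y) μ := hZ2.integrable_mul hY
  have hZcondY : Integrable (Z * μ[Y|m]) μ := hZ2.integrable_mul (hY.condExp one_le_two)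
  calc ∫ ω, Z ω * (μ[Y|m] ω - Y ω) ∂μ = ∫ ω, (Z * μ[Y|m]) ω ∂μ - ∫ ω, (Z * Y) ω ∂μ := by
        simp_rw [mul_sub]; exact integral_sub hZcondY hZY
    _ = ∫ ω, (μ[Z * Y|m]) ω ∂μ - ∫ ω, (Z * Y) ω ∂μ := by
        rw [integral_congr_ae (condExp_mul_of_stronglyMeasurable_left hZ hZY
          (hY.integrable one_le_two))]
    _ = 0 := by rw [integral_condExp hm, sub_self]

theorem integral_sq_sub_eq_add_of_ae_eq_condExp (hm : m ≤ m0) (hY : MemLp Y 2 μ)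
    {φ c : Ω → ℝ} (hφ : φ =ᵐ[μ] μ[Y|m]) (hc : MemLp c 2 μ)
    (hcφ : StronglyMeasurable[m] (c - φ)) :
    ∫ ω, (c ω - Y ω) ^ 2 ∂μ = ∫ ω, (c ω - φ ω) ^ 2 ∂μ + ∫ ω, (φ ω - Y ω) ^ 2 ∂μ := by
  have hφ2 : MemLp φ 2 μ := (hY.condExp one_le_two).ae_eq hφ.symm
  have hcross : ∫ ω, (c - φ) ω * (φ ω - Y ω) ∂μ = 0 := by
    rw [← integral_mul_condExp_sub_eq_zero hm hcφ (hc.sub hφ2) hY]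
    refine integral_congr_ae ?_
    filter_upwards [hφ] with ω hω
    rw [hω]
  have hgap_sq : Integrable (fun ω => (c ω - φ ω) ^ 2) μ := (hc.sub hφ2).integrable_sq
  have hres_sq : Integrable (fun ω => (φ ω - Y ω) ^ 2) μ := (hφ2.sub hY).integrable_sq
  have hprod : Integrable (fun ω => (c - φ) ω * (φ ω - Y ω)) μ :=
    (hc.sub hφ2).integrable_mul (hφ2.sub hY)
  have hsum : Integrable (fun ω => (c ω - φ ω) ^ 2 + 2 * ((c - φ) ω * (φ ω - Y ω))) μ :=
    hgap_sq.add (hprod.const_mul 2)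
  calc ∫ ω, (c ω - Y ω) ^ 2 ∂μ
      = ∫ ω, ((c ω - φ ω) ^ 2 + 2 * ((c - φ) ω * (φ ω - Y ω))) ∂μ
        + ∫ ω, (φ ω - Y ω) ^ 2 ∂μ := by
        rw [← integral_add hsum hres_sq]
        congr 1; funext ω; simp only [Pi.sub_apply]; ring
    _ = ∫ ω, (c ω - φ ω) ^ 2 ∂μ + ∫ ω, (φ ω - Y ω) ^ 2 ∂μ := by
        rw [integral_add hgap_sq (hprod.const_mul 2), integral_const_mul, hcross, mul_zero,
          add_zero]

end Orthogonality

namespace ProbabilityTheory.IndepFun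

variable {Ω α β E : Type*} {mΩ : MeasurableSpace Ω} [MeasurableSpace α] [MeasurableSpace β]
  {μ : Measure Ω} {U : Ω → α} {A : Ω → β} {s : Set β} {w : α → E}

theorem map_restrict_preimage (hInd : IndepFun U A μ) (hU : Measurable U)
    (hs : MeasurableSet s) :
    (μ.restrict (A ⁻¹' s)).map U = μ (A ⁻¹' s) • μ.map U := by
  ext t ht
  rw [Measure.map_apply hU ht, Measure.restrict_apply (hU ht), Measure.smul_apply,
    Measure.map_apply hU ht, hInd.measure_inter_preimage_eq_mul _ _ ht hs, smul_eq_mul, mul_comm]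

theorem memLp_comp_of_eqOn [NormedAddCommGroup E] [IsFiniteMeasure μ] {p : ENNReal}
    (hInd : IndepFun U A μ) (hU : Measurable U) (hA : Measurable A) (hs : MeasurableSet s)
    (hA0 : μ (A ⁻¹' s) ≠ 0) (hw : StronglyMeasurable w) {φ : Ω → E} (hφ : MemLp φ p μ)
    (heq : Set.EqOn (w ∘ U) φ (A ⁻¹' s)) :
    MemLp (w ∘ U) p μ := by
  have hrestrict : MemLp (w ∘ U) p (μ.restrict (A ⁻¹' s)) :=
    (hφ.restrict _).ae_eq ((ae_restrict_mem (hA hs)).mono fun _ hω => (heq hω).symm)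
  rw [← memLp_map_measure_iff hw.aestronglyMeasurable hU.aemeasurable] at hrestrict ⊢
  rw [hInd.map_restrict_preimage hU hs] at hrestrict
  refine hrestrict.of_measure_le_smul (c := (μ (A ⁻¹' s))⁻¹) (ENNReal.inv_ne_top.2 hA0) ?_
  rw [smul_smul, ENNReal.inv_mul_cancel hA0 (measure_ne_top _ _), one_smul]

theorem setIntegral_comp_preimage [NormedAddCommGroup E] [NormedSpace ℝ E]
    (hInd : IndepFun U A μ) (hU : Measurable U) (hs : MeasurableSet s) (hw : StronglyMeasurable w) :
    ∫ ω in A ⁻¹' s, w (U ω) ∂μ = μ.real (A ⁻¹' s) • ∫ ω, w (U ω) ∂μ := by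
  rw [← integral_map hU.aemeasurable hw.aestronglyMeasurable, hInd.map_restrict_preimage hU hs,
    integral_smul_measure, integral_map hU.aemeasurable hw.aestronglyMeasurable]
  rfl

end ProbabilityTheory.IndepFun

theorem MeasurableEmbedding.comap_comp_eq {Ω α γ : Type*} [MeasurableSpace α] [MeasurableSpace γ]
    {e : α → γ} (he : MeasurableEmbedding e) (V : Ω → α) :
    MeasurableSpace.comap (e ∘ V) ‹_› = MeasurableSpace.comap V ‹_› := by
  rw [← MeasurableSpace.comap_comp, he.comap_eq]

section TwoGroups

variable {Ω α : Type*} {m m0 : MeasurableSpace Ω} [MeasurableSpace α] {μ : Measure Ω}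
  [IsProbabilityMeasure μ] {U : Ω → α} {A : Ω → Bool} {g h : α → ℝ}

theorem measureReal_eq_true_add_measureReal_eq_false (hA : Measurable A) :
    μ.real {ω | A ω = true} + μ.real {ω | A ω = false} = 1 := by
  have hcompl : {ω | A ω = true}ᶜ = {ω | A ω = false} := by ext; simp
  rw [← hcompl]
  exact probReal_add_probReal_compl (hA (measurableSet_singleton true))

theorem ae_mix_eq_ite_of_mul_eq_zero (hA : Measurable A) {x y : Ω → ℝ}
    (hdeg : μ.real {ω | A ω = true} * μ.real {ω | A ω = false} = 0) :
    ∀ᵐ ω ∂μ, μ.real {ω | A ω = true} * x ω + μ.real {ω | A ω = false} * y ω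
      = if A ω = true then x ω else y ω := by
  have hpq := measureReal_eq_true_add_measureReal_eq_false (μ := μ) hA
  rcases mul_eq_zero.1 hdeg with hp | hq
  · filter_upwards [measure_eq_zero_iff_ae_notMem.1
      ((measureReal_eq_zero_iff (measure_ne_top _ _)).1 hp)] with ω (hω : A ω ≠ true)
    simp [hω, hp, show μ.real {ω | A ω = false} = 1 by linarith]
  · filter_upwards [measure_eq_zero_iff_ae_notMem.1
      ((measureReal_eq_zero_iff (measure_ne_top _ _)).1 hq)] with ω (hω : A ω ≠ false)
    simp [hω, hq, show μ.real {ω | A ω = true} = 1 by linarith]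

theorem integral_sq_mix_sub_ite (hInd : IndepFun U A μ) (hU : Measurable U)
    (hA : Measurable A) (hg : Measurable g) (hh : Measurable h)
    (hint : Integrable (fun ω => (μ.real {ω | A ω = true} * g (U ω)
      + μ.real {ω | A ω = false} * h (U ω) - if A ω = true then g (U ω) else h (U ω)) ^ 2) μ) :
    ∫ ω, (μ.real {ω | A ω = true} * g (U ω) + μ.real {ω | A ω = false} * h (U ω)
        - if A ω = true then g (U ω) else h (U ω)) ^ 2 ∂μ
      = μ.real {ω | A ω = true} * μ.real {ω | A ω = false}
        * ∫ ω, (g (U ω) - h (U ω)) ^ 2 ∂μ := by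
  set p := μ.real {ω | A ω = true}
  set q := μ.real {ω | A ω = false}
  have hpq : p + q = 1 := measureReal_eq_true_add_measureReal_eq_false hA
  have hT : MeasurableSet {ω | A ω = true} := hA (measurableSet_singleton true)
  have hF : MeasurableSet {ω | A ω = false} := hA (measurableSet_singleton false)
  have hcompl : {ω | A ω = true}ᶜ = {ω | A ω = false} := by ext; simp
  have hW : StronglyMeasurable fun u => (g u - h u) ^ 2 :=
    ((hg.sub hh).pow_const 2).stronglyMeasurable
  rw [← integral_add_compl hT hint, hcompl]
  calc _ = ∫ ω in {ω | A ω = true}, q ^ 2 * (g (U ω) - h (U ω)) ^ 2 ∂μ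
        + ∫ ω in {ω | A ω = false}, p ^ 2 * (g (U ω) - h (U ω)) ^ 2 ∂μ := by
        congr 1
        · refine setIntegral_congr_fun hT fun ω (hω : A ω = true) => ?_
          simp only [hω, if_true]
          linear_combination g (U ω) * ((p - 1 - q) * g (U ω) + 2 * q * h (U ω)) * hpq
        · refine setIntegral_congr_fun hF fun ω (hω : A ω = false) => ?_
          simp only [hω, Bool.false_eq_true, if_false]
          linear_combination h (U ω) * ((q - 1 - p) * h (U ω) + 2 * p * g (U ω)) * hpq
    _ = q ^ 2 * (p * ∫ ω, (g (U ω) - h (U ω)) ^ 2 ∂μ)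
        + p ^ 2 * (q * ∫ ω, (g (U ω) - h (U ω)) ^ 2 ∂μ) := by
        have hgroup : ∀ a : Bool, ∫ ω in {ω | A ω = a}, (g (U ω) - h (U ω)) ^ 2 ∂μ
            = μ.real {ω | A ω = a} * ∫ ω, (g (U ω) - h (U ω)) ^ 2 ∂μ := fun a =>
          hInd.setIntegral_comp_preimage hU (measurableSet_singleton a) hW
        rw [integral_const_mul, integral_const_mul, hgroup, hgroup]
    _ = p * q * ∫ ω, (g (U ω) - h (U ω)) ^ 2 ∂μ := by
        linear_combination p * q * (∫ ω, (g (U ω) - h (U ω)) ^ 2 ∂μ) * hpq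

theorem excess_risk_of_mix_of_indepFun (hm : m ≤ m0) (hUm : Measurable[m] U)
    (hAm : Measurable[m] A) (hInd : IndepFun U A μ) (hg : Measurable g) (hh : Measurable h)
    {Y : Ω → ℝ} (hY : MemLp Y 2 μ)
    (hφ : (fun ω => if A ω = true then g (U ω) else h (U ω)) =ᵐ[μ] μ[Y|m]) :
    ∫ ω, (μ.real {ω | A ω = true} * g (U ω) + μ.real {ω | A ω = false} * h (U ω) - Y ω) ^ 2 ∂μ
      - ∫ ω, ((if A ω = true then g (U ω) else h (U ω)) - Y ω) ^ 2 ∂μ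
      = μ.real {ω | A ω = true} * μ.real {ω | A ω = false}
        * ∫ ω, (g (U ω) - h (U ω)) ^ 2 ∂μ := by
  set p := μ.real {ω | A ω = true}
  set q := μ.real {ω | A ω = false}
  set mix := fun ω => p * g (U ω) + q * h (U ω)
  set sel := fun ω => if A ω = true then g (U ω) else h (U ω)
  have hU : Measurable U := hUm.mono hm le_rfl
  have hA : Measurable A := hAm.mono hm le_rfl
  have hpq : p + q = 1 := measureReal_eq_true_add_measureReal_eq_false hA
  by_cases hdeg : p * q = 0
  · rw [integral_congr_ae ((ae_mix_eq_ite_of_mul_eq_zero hA hdeg).mono fun ω hω => by rw [hω]),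
      sub_self, hdeg, zero_mul]
  obtain ⟨hp0, hq0⟩ := mul_ne_zero_iff.1 hdeg
  have hT0 : μ {ω | A ω = true} ≠ 0 := fun h0 => hp0 (by simp [p, Measure.real, h0])
  have hF0 : μ {ω | A ω = false} ≠ 0 := fun h0 => hq0 (by simp [q, Measure.real, h0])
  have hsel2 : MemLp sel 2 μ := (hY.condExp one_le_two).ae_eq hφ.symm
  have hg2 : MemLp (g ∘ U) 2 μ :=
    hInd.memLp_comp_of_eqOn hU hA (measurableSet_singleton true)
      hT0 hg.stronglyMeasurable hsel2
      fun ω (hω : A ω = true) => by simp [sel, hω]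
  have hh2 : MemLp (h ∘ U) 2 μ :=
    hInd.memLp_comp_of_eqOn hU hA (measurableSet_singleton false)
      hF0 hh.stronglyMeasurable hsel2
      fun ω (hω : A ω = false) => by simp [sel, hω]
  have hmix2 : MemLp mix 2 μ := (hg2.const_mul p).add (hh2.const_mul q)
  have hgap : StronglyMeasurable[m] (mix - sel) :=
    ((((hg.comp hUm).const_mul p).add ((hh.comp hUm).const_mul q)).sub
      (Measurable.ite (hAm (measurableSet_singleton true)) (hg.comp hUm) (hh.comp hUm))
      ).stronglyMeasurable
  rw [integral_sq_sub_eq_add_of_ae_eq_condExp hm hY hφ hmix2 hgap, add_sub_cancel_right]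
  exact integral_sq_mix_sub_ite hInd hU hA hg hh (hmix2.sub hsel2).integrable_sq

end TwoGroups

/-- Excess risk of the optimal counterfactually fair regressor: under a structural model
`X = F(U, A)` with `F(·,a)` invertible and `A ⊥ U`, the fair predictor
`φ_CF(x,a) = P(A=a)·φ*(x,a) + P(A=1-a)·φ*(x_{1-a}, 1-a)` (with `φ*(x,a) = E[Y|X=x,A=a]`
and `x_{1-a} = F(F⁻¹(x,a), 1-a)`) satisfies
`E[(φ_CF(X,A) - Y)²] - E[(φ*(X,A) - Y)²] = π(1-π)·E_U[(E[Y|U,A=1] - E[Y|U,A=0])²]`. -/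
theorem excess_risk_of_optimal_counterfactually_fair_regressor
    {Ω : Type*} [MeasurableSpace Ω] (μ : Measure Ω) [IsProbabilityMeasure μ]
    {k d : ℕ}
    (U : Ω → EuclideanSpace ℝ (Fin k)) (A : Ω → Bool)
    (hU : Measurable U) (hA : Measurable A)
    (hInd : ProbabilityTheory.IndepFun U A μ)
    (F : EuclideanSpace ℝ (Fin k) → Bool → EuclideanSpace ℝ (Fin d))
    (hFbij : ∀ a, Function.Bijective (F · a))
    (hFmeas : ∀ a, Measurable (F · a))
    (X : Ω → EuclideanSpace ℝ (Fin d)) (hX : ∀ ω, X ω = F (U ω) (A ω))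
    (Y : Ω → ℝ) (hY : MemLp Y 2 μ)
    (φstar : EuclideanSpace ℝ (Fin d) → Bool → ℝ) (hφm : ∀ a, Measurable (φstar · a))
    (hcond : (fun ω => φstar (X ω) (A ω)) =ᵐ[μ]
      μ[Y | MeasurableSpace.comap (fun ω => (X ω, A ω)) inferInstance]) :
    ∫ ω, (((μ {ω' | A ω' = A ω}).toReal * φstar (X ω) (A ω)
          + (μ {ω' | A ω' = !(A ω)}).toReal * φstar (F (U ω) (!(A ω))) (!(A ω)))
        - Y ω) ^ 2 ∂μ
      - ∫ ω, (φstar (X ω) (A ω) - Y ω) ^ 2 ∂μ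
    = (μ {ω | A ω = true}).toReal * (μ {ω | A ω = false}).toReal
        * ∫ ω, (φstar (F (U ω) true) true - φstar (F (U ω) false) false) ^ 2 ∂μ := by
  set g := fun u => φstar (F u true) true
  set h := fun u => φstar (F u false) false
  have hsel : ∀ ω, φstar (X ω) (A ω) = if A ω = true then g (U ω) else h (U ω) := by
    intro ω; cases hω : A ω <;> simp [hX, hω, g, h]
  have hfair : ∀ ω, (μ {ω' | A ω' = A ω}).toReal * φstar (X ω) (A ω)
        + (μ {ω' | A ω' = !(A ω)}).toReal * φstar (F (U ω) (!(A ω))) (!(A ω))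
      = μ.real {ω | A ω = true} * g (U ω) + μ.real {ω | A ω = false} * h (U ω) := by
    intro ω; cases hω : A ω <;> simp [hX, hω, g, h, Measure.real, add_comm]
  have hembed : MeasurableEmbedding fun ua : EuclideanSpace ℝ (Fin k) × Bool =>
      (F ua.1 ua.2, ua.2) := by
    refine Measurable.measurableEmbedding ?_ ?_
    · exact (measurable_from_prod_countable_left hFmeas).prodMk measurable_snd
    · rintro ⟨u, a⟩ ⟨u', a'⟩ heq
      obtain ⟨hF, rfl⟩ := Prod.mk.inj heq
      exact Prod.ext ((hFbij a).injective hF) rfl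
  have hσ : MeasurableSpace.comap (fun ω => (X ω, A ω)) inferInstance
      = MeasurableSpace.comap (fun ω => (U ω, A ω)) inferInstance := by
    rw [← hembed.comap_comp_eq]
    congr 1
    funext ω
    simp [hX]
  rw [hσ] at hcond
  simp_rw [hfair]
  simp_rw [hsel] at hcond ⊢
  exact excess_risk_of_mix_of_indepFun (hU.prodMk hA).comap_le
    (measurable_fst.comp (comap_measurable _)) (measurable_snd.comp (comap_measurable _)) hInd
    ((hφm true).comp (hFmeas true)) ((hφm false).comp (hFmeas false)) hY hcond
end

section
/- The excess cross-entropy risk of the optimal counterfactually fair classifier equals the conditional mutual information I(A; Y | U): under the invertible structural model with A ⊥ U and binary Y, E[ℓ_CE(φ_CF(X,A), Y)] - E[ℓ_CE(φ*(X,A), Y)] = I(A; Y | U), where ℓ_CE is binary cross-entropy. -/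
/-!
Since `φ*(X, A)` is a version of `E[Y | X, A]` and the cross-entropy is affine in the label,
replacing `Y` by `φ*(X, A)` does not change the expected loss of a predictor that is a function
of `(X, A)`; `φ_CF` is one, because `U` is recovered from `X` by inverting `F (·, A)`. This step
is carried out with lower Lebesgue integrals, so it needs no integrability. Pointwise,
`CE(p, q) = H(p) + KL(p ‖ q)`, and all terms are integrable: `H ≤ log 2`, and
`KL(φ* ‖ φ_CF) ≤ -log P(A = a)` because `φ*` enters the mixture `φ_CF` with weight `P(A = a)`.
-/

open MeasureTheory Real Set
open scoped ENNReal

/-- The cross-entropy of `Bernoulli q` relative to `Bernoulli y`; for a label `y ∈ {0, 1}` it is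
the loss `ℓ_CE(q, y)`. -/
noncomputable def binCrossEntropy (y q : ℝ) : ℝ := -(y * log q + (1 - y) * log (1 - q))

noncomputable def binKLDiv (p q : ℝ) : ℝ := p * log (p / q) + (1 - p) * log ((1 - p) / (1 - q))

section Real

variable {y p q : ℝ}

lemma binCrossEntropy_nonneg (hy : y ∈ Icc 0 1) (hq : q ∈ Ioo 0 1) : 0 ≤ binCrossEntropy y q := by
  have h1 : log q ≤ 0 := (log_neg hq.1 hq.2).le
  have h2 : log (1 - q) ≤ 0 := (log_neg (by linarith [hq.2]) (by linarith [hq.1])).le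
  unfold binCrossEntropy
  nlinarith [hy.1, hy.2]

lemma ofReal_binCrossEntropy (hy : y ∈ Icc 0 1) (hq : q ∈ Ioo 0 1) :
    ENNReal.ofReal (binCrossEntropy y q)
      = ENNReal.ofReal y * ENNReal.ofReal (-log q)
        + ENNReal.ofReal (1 - y) * ENNReal.ofReal (-log (1 - q)) := by
  have h1 : 0 ≤ -log q := neg_nonneg.2 (log_neg hq.1 hq.2).le
  have h2 : 0 ≤ -log (1 - q) := neg_nonneg.2 (log_neg (by linarith [hq.2]) (by linarith [hq.1])).le
  have hy' : 0 ≤ 1 - y := by linarith [hy.2]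
  rw [← ENNReal.ofReal_mul hy.1, ← ENNReal.ofReal_mul hy',
    ← ENNReal.ofReal_add (mul_nonneg hy.1 h1) (mul_nonneg hy' h2), binCrossEntropy]
  ring_nf

lemma binCrossEntropy_self (p : ℝ) : binCrossEntropy p p = binEntropy p := by
  rw [binCrossEntropy, binEntropy, log_inv, log_inv]
  ring

lemma binCrossEntropy_eq_binEntropy_add_binKLDiv (hp : p ∈ Ioo 0 1) (hq : q ∈ Ioo 0 1) :
    binCrossEntropy p q = binEntropy p + binKLDiv p q := by
  have hp' : 1 - p ≠ 0 := by linarith [hp.2]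
  have hq' : 1 - q ≠ 0 := by linarith [hq.2]
  rw [← binCrossEntropy_self, binCrossEntropy, binCrossEntropy, binKLDiv,
    log_div hp.1.ne' hq.1.ne', log_div hp' hq']
  ring

lemma binKLDiv_nonneg (hp : p ∈ Ioo 0 1) (hq : q ∈ Ioo 0 1) : 0 ≤ binKLDiv p q := by
  have hp' : 0 < 1 - p := by linarith [hp.2]
  have hq' : 0 < 1 - q := by linarith [hq.2]
  have h1 := mul_le_mul_of_nonneg_left (one_sub_inv_le_log_of_pos (div_pos hp.1 hq.1)) hp.1.le
  have h2 := mul_le_mul_of_nonneg_left (one_sub_inv_le_log_of_pos (div_pos hp' hq')) hp'.le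
  rw [inv_div] at h1 h2
  have e1 : p * (1 - q / p) = p - q := by rw [mul_sub, mul_one, mul_div_cancel₀ _ hp.1.ne']
  have e2 : (1 - p) * (1 - (1 - q) / (1 - p)) = q - p := by
    rw [mul_sub, mul_one, mul_div_cancel₀ _ hp'.ne']; ring
  unfold binKLDiv
  linarith

/-- If `p` enters the mixture `q` with weight `c`, both likelihood ratios are at most `1 / c`. -/
lemma binKLDiv_mixture_le {c c' r : ℝ} (hp : p ∈ Ioo 0 1) (hr : r ∈ Icc 0 1) (hc : 0 < c)
    (hc' : 0 ≤ c') (hcc' : c + c' = 1) : binKLDiv p (c * p + c' * r) ≤ -log c := by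
  have hp' : 0 < 1 - p := by linarith [hp.2]
  have hcr' : 0 ≤ c' * (1 - r) := mul_nonneg hc' (by linarith [hr.2])
  have hratio : ∀ {a b : ℝ}, 0 < a → c * a ≤ b → log (a / b) ≤ -log c := fun {a b} ha hab => by
    have hb : 0 < b := (mul_pos hc ha).trans_le hab
    rw [← log_inv]
    exact log_le_log (div_pos ha hb) ((div_le_iff₀ hb).2 (by field_simp; linarith))
  have h1 := hratio hp.1 (le_add_of_nonneg_right (mul_nonneg hc' hr.1))
  have h2 := hratio hp' (show c * (1 - p) ≤ 1 - (c * p + c' * r) by nlinarith)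
  unfold binKLDiv
  linarith [mul_le_mul_of_nonneg_left h1 hp.1.le, mul_le_mul_of_nonneg_left h2 hp'.le]

end Real

lemma condExp_const_sub_ae_eq {Ω : Type*} {m mΩ : MeasurableSpace Ω} {μ : Measure Ω}
    [IsFiniteMeasure μ] (hm : m ≤ mΩ) {Y f : Ω → ℝ} (hYint : Integrable Y μ)
    (hf : f =ᵐ[μ] μ[Y | m]) (c : ℝ) : (fun ω => c - f ω) =ᵐ[μ] μ[fun ω => c - Y ω | m] := by
  filter_upwards [condExp_sub (integrable_const c) hYint m, hf] with ω hsub hfω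
  rw [show (fun ω => c - Y ω) = (fun _ => c) - Y from rfl, hsub, Pi.sub_apply,
    condExp_const hm, hfω]

section CondExp

variable {Ω β : Type*} [MeasurableSpace Ω] [MeasurableSpace β] {μ : Measure Ω} [IsFiniteMeasure μ]
  {Z : Ω → β} {Y : Ω → ℝ} {p q : β → ℝ}

lemma map_withDensity_ofReal_eq_withDensity_of_condExp (hZ : Measurable Z) (hYint : Integrable Y μ)
    (hY : 0 ≤ᵐ[μ] Y) (hp : Measurable p)
    (hcond : (fun ω => p (Z ω)) =ᵐ[μ] μ[Y | MeasurableSpace.comap Z inferInstance]) :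
    (μ.withDensity fun ω => ENNReal.ofReal (Y ω)).map Z
      = (μ.map Z).withDensity fun z => ENNReal.ofReal (p z) := by
  have hpZint : Integrable (fun ω => p (Z ω)) μ := integrable_condExp.congr hcond.symm
  have hpZ : 0 ≤ᵐ[μ] fun ω => p (Z ω) := (condExp_nonneg hY).trans_eq hcond.symm
  ext t ht
  have hZt : MeasurableSet[MeasurableSpace.comap Z inferInstance] (Z ⁻¹' t) := ⟨t, ht, rfl⟩
  rw [Measure.map_apply hZ ht, withDensity_apply _ (hZ ht), withDensity_apply _ ht,
    setLIntegral_map ht (by fun_prop) hZ,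
    ← ofReal_integral_eq_lintegral_ofReal hYint.restrict (ae_restrict_of_ae hY),
    ← ofReal_integral_eq_lintegral_ofReal hpZint.restrict (ae_restrict_of_ae hpZ),
    ← setIntegral_condExp hZ.comap_le hYint hZt]
  exact congrArg ENNReal.ofReal (setIntegral_congr_ae (hZ ht) (hcond.mono fun _ h _ => h.symm))

lemma lintegral_ofReal_mul_comp_eq_of_condExp (hZ : Measurable Z) (hYm : Measurable Y)
    (hYint : Integrable Y μ) (hY : 0 ≤ᵐ[μ] Y) (hp : Measurable p)
    (hcond : (fun ω => p (Z ω)) =ᵐ[μ] μ[Y | MeasurableSpace.comap Z inferInstance])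
    {g : β → ℝ≥0∞} (hg : Measurable g) :
    ∫⁻ ω, ENNReal.ofReal (Y ω) * g (Z ω) ∂μ = ∫⁻ ω, ENNReal.ofReal (p (Z ω)) * g (Z ω) ∂μ := by
  calc ∫⁻ ω, ENNReal.ofReal (Y ω) * g (Z ω) ∂μ
      = ∫⁻ z, g z ∂(μ.withDensity fun ω => ENNReal.ofReal (Y ω)).map Z := by
        rw [lintegral_map hg hZ,
          lintegral_withDensity_eq_lintegral_mul _ (by fun_prop) (by fun_prop)]
        rfl
    _ = ∫⁻ z, ENNReal.ofReal (p z) * g z ∂μ.map Z := by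
        rw [map_withDensity_ofReal_eq_withDensity_of_condExp hZ hYint hY hp hcond,
          lintegral_withDensity_eq_lintegral_mul _ (by fun_prop) hg]
        rfl
    _ = ∫⁻ ω, ENNReal.ofReal (p (Z ω)) * g (Z ω) ∂μ := lintegral_map (by fun_prop) hZ

lemma integral_binCrossEntropy_eq_of_condExp (hZ : Measurable Z) (hYm : Measurable Y)
    (hY : ∀ ω, Y ω ∈ Icc 0 1) (hpm : Measurable p) (hp : ∀ z, p z ∈ Icc 0 1)
    (hcond : (fun ω => p (Z ω)) =ᵐ[μ] μ[Y | MeasurableSpace.comap Z inferInstance])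
    (hqm : Measurable q) (hq : ∀ z, q z ∈ Ioo 0 1) :
    ∫ ω, binCrossEntropy (Y ω) (q (Z ω)) ∂μ = ∫ ω, binCrossEntropy (p (Z ω)) (q (Z ω)) ∂μ := by
  have hYint : Integrable Y μ := .of_mem_Icc 0 1 hYm.aemeasurable (ae_of_all _ hY)
  have hY' : ∀ ω, 1 - Y ω ∈ Icc 0 1 := fun ω => ⟨by linarith [(hY ω).2], by linarith [(hY ω).1]⟩
  rw [integral_eq_lintegral_of_nonneg_ae (ae_of_all _ fun ω => binCrossEntropy_nonneg (hY ω) (hq _))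
      (by unfold binCrossEntropy; fun_prop),
    integral_eq_lintegral_of_nonneg_ae (ae_of_all _ fun ω => binCrossEntropy_nonneg (hp _) (hq _))
      (by unfold binCrossEntropy; fun_prop)]
  simp only [ofReal_binCrossEntropy (hY _) (hq _), ofReal_binCrossEntropy (hp _) (hq _)]
  rw [lintegral_add_left (by fun_prop), lintegral_add_left (by fun_prop),
    lintegral_ofReal_mul_comp_eq_of_condExp hZ hYm hYint (ae_of_all _ fun ω => (hY ω).1) hpm hcond
      (g := fun z => ENNReal.ofReal (-log (q z))) (by fun_prop),
    lintegral_ofReal_mul_comp_eq_of_condExp (Y := fun ω => 1 - Y ω) (p := fun z => 1 - p z) hZ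
      (by fun_prop)
      (.of_mem_Icc 0 1 (by fun_prop) (ae_of_all _ hY')) (ae_of_all _ fun ω => (hY' ω).1)
      (by fun_prop) (condExp_const_sub_ae_eq hZ.comap_le hYint hcond 1)
      (g := fun z => ENNReal.ofReal (-log (1 - q z))) (by fun_prop)]

lemma integral_binCrossEntropy_sub_eq_integral_binKLDiv (hZ : Measurable Z) (hYm : Measurable Y) (hY : ∀ ω, Y ω ∈ Icc 0 1)
    (hpm : Measurable p) (hp : ∀ z, p z ∈ Ioo 0 1)
    (hcond : (fun ω => p (Z ω)) =ᵐ[μ] μ[Y | MeasurableSpace.comap Z inferInstance])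
    (hqm : Measurable q) (hq : ∀ z, q z ∈ Ioo 0 1)
    (hKL : Integrable (fun ω => binKLDiv (p (Z ω)) (q (Z ω))) μ) :
    ∫ ω, binCrossEntropy (Y ω) (q (Z ω)) ∂μ - ∫ ω, binCrossEntropy (Y ω) (p (Z ω)) ∂μ
      = ∫ ω, binKLDiv (p (Z ω)) (q (Z ω)) ∂μ := by
  have hp' : ∀ z, p z ∈ Icc 0 1 := fun z => Ioo_subset_Icc_self (hp z)
  have hH : Integrable (fun ω => binEntropy (p (Z ω))) μ :=
    .of_bound (binEntropy_continuous.measurable.comp (hpm.comp hZ)).aestronglyMeasurable (log 2)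
      (ae_of_all _ fun ω => by
        rw [norm_of_nonneg (binEntropy_nonneg (hp' _).1 (hp' _).2)]; exact binEntropy_le_log_two)
  rw [integral_binCrossEntropy_eq_of_condExp hZ hYm hY hpm hp' hcond hqm hq,
    integral_binCrossEntropy_eq_of_condExp hZ hYm hY hpm hp' hcond hpm hp]
  simp only [binCrossEntropy_self, binCrossEntropy_eq_binEntropy_add_binKLDiv (hp _) (hq _)]
  rw [integral_add hH hKL]
  ring

end CondExp

lemma ae_measure_preimage_singleton_ne_zero {Ω α : Type*} [MeasurableSpace Ω] [MeasurableSpace α]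
    [Countable α] [MeasurableSingletonClass α] {μ : Measure Ω} {f : Ω → α} (hf : Measurable f) :
    ∀ᵐ ω ∂μ, μ (f ⁻¹' {f ω}) ≠ 0 := by
  have h : ∀ᵐ a ∂μ.map f, μ.map f {a} ≠ 0 := ae_iff_of_countable.2 fun _ h => h
  filter_upwards [ae_of_ae_map hf.aemeasurable h] with ω hω
  rwa [Measure.map_apply hf (measurableSet_singleton _)] at hω

lemma integrable_of_le_neg_log_measureReal_preimage {Ω α : Type*} [MeasurableSpace Ω]
    [MeasurableSpace α] [Finite α] [MeasurableSingletonClass α] {μ : Measure Ω}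
    [IsFiniteMeasure μ] {A : Ω → α} (hA : Measurable A) {f : Ω → ℝ}
    (hf : AEStronglyMeasurable f μ) (hf0 : ∀ ω, 0 ≤ f ω)
    (hle : ∀ ω, 0 < μ.real (A ⁻¹' {A ω}) → f ω ≤ -log (μ.real (A ⁻¹' {A ω}))) :
    Integrable f μ := by
  refine .mono'
    ((Integrable.of_finite (f := fun a => -log (μ.real (A ⁻¹' {a})))).comp_measurable hA) hf ?_
  filter_upwards [ae_measure_preimage_singleton_ne_zero (μ := μ) hA] with ω hω
  rw [norm_of_nonneg (hf0 ω)]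
  exact hle ω (ENNReal.toReal_pos hω (measure_ne_top _ _))

lemma measureReal_eq_add_measureReal_eq_not {Ω : Type*} [MeasurableSpace Ω] {μ : Measure Ω}
    [IsProbabilityMeasure μ] {A : Ω → Bool} (hA : Measurable A) (a : Bool) :
    μ.real {ω | A ω = a} + μ.real {ω | A ω = !a} = 1 := by
  have hcompl : {ω | A ω = !a} = {ω | A ω = a}ᶜ := by ext ω; cases A ω <;> cases a <;> simp
  rw [hcompl, probReal_compl_eq_one_sub (show MeasurableSet {ω | A ω = a} from
    hA (measurableSet_singleton a))]
  ring

section FairMixture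

variable {α β : Type*} [MeasurableSpace α] [MeasurableSpace β] [Nonempty α]
  {F : α → Bool → β} (hF : ∀ a, MeasurableEmbedding (F · a)) (w : Bool → ℝ) {φ : β → Bool → ℝ}

/-- `φ_CF` as a function of the observation `(x, a)`; the counterfactual `x_{!a}` of `x` is
`F (F (·, a)⁻¹ x) (!a)`. -/
noncomputable def fairMixture (φ : β → Bool → ℝ) (z : β × Bool) : ℝ :=
  w z.2 * φ z.1 z.2 + w (!z.2) * φ (F ((hF z.2).invFun z.1) (!z.2)) (!z.2)

lemma fairMixture_apply (u : α) (a : Bool) :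
    fairMixture hF w φ (F u a, a) = w a * φ (F u a) a + w (!a) * φ (F u (!a)) (!a) := by
  rw [fairMixture, (hF a).leftInverse_invFun u]

lemma measurable_fairMixture (hφ : ∀ a, Measurable (φ · a)) : Measurable (fairMixture hF w φ) :=
  measurable_from_prod_countable_left fun a => by
    have hcf : Measurable fun x => φ (F ((hF a).invFun x) (!a)) (!a) :=
      (hφ (!a)).comp ((hF (!a)).measurable.comp (hF a).measurable_invFun)
    exact ((hφ a).const_mul (w a)).fun_add (hcf.const_mul (w (!a)))

lemma fairMixture_mem_Ioo (hw0 : ∀ a, 0 ≤ w a) (hw : ∀ a, w a + w (!a) = 1)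
    (hφ : ∀ x a, φ x a ∈ Ioo 0 1) (z : β × Bool) : fairMixture hF w φ z ∈ Ioo 0 1 :=
  convex_Ioo 0 1 (hφ _ _) (hφ _ _) (hw0 _) (hw0 _) (hw z.2)

end FairMixture

theorem excess_cross_entropy_risk_eq_conditional_mutual_information_general
    {Ω : Type*} [MeasurableSpace Ω] (μ : Measure Ω) [IsProbabilityMeasure μ]
    {k d : ℕ}
    (U : Ω → EuclideanSpace ℝ (Fin k)) (A : Ω → Bool)
    (hU : Measurable U) (hA : Measurable A)
    (F : EuclideanSpace ℝ (Fin k) → Bool → EuclideanSpace ℝ (Fin d))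
    (hFbij : ∀ a, Function.Bijective (F · a))
    (hFmeas : ∀ a, Measurable (F · a))
    (X : Ω → EuclideanSpace ℝ (Fin d)) (hX : ∀ ω, X ω = F (U ω) (A ω))
    (Y : Ω → ℝ) (hYm : Measurable Y) (hY01 : ∀ ω, Y ω = 0 ∨ Y ω = 1)
    (φstar : EuclideanSpace ℝ (Fin d) → Bool → ℝ) (hφm : ∀ a, Measurable (φstar · a))
    (hφ01 : ∀ x a, φstar x a ∈ Set.Ioo (0 : ℝ) 1)
    (hcond : (fun ω => φstar (X ω) (A ω)) =ᵐ[μ]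
      μ[Y | MeasurableSpace.comap (fun ω => (X ω, A ω)) inferInstance])
    (φCF : Ω → ℝ)
    (hφCF : ∀ ω, φCF ω = (μ {ω' | A ω' = A ω}).toReal * φstar (X ω) (A ω)
        + (μ {ω' | A ω' = !(A ω)}).toReal * φstar (F (U ω) (!(A ω))) (!(A ω))) :
    ∫ ω, -(Y ω * Real.log (φCF ω) + (1 - Y ω) * Real.log (1 - φCF ω)) ∂μ
      - ∫ ω, -(Y ω * Real.log (φstar (X ω) (A ω))
            + (1 - Y ω) * Real.log (1 - φstar (X ω) (A ω))) ∂μ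
    = ∫ ω, (φstar (X ω) (A ω) * Real.log (φstar (X ω) (A ω) / φCF ω)
        + (1 - φstar (X ω) (A ω)) * Real.log ((1 - φstar (X ω) (A ω)) / (1 - φCF ω))) ∂μ := by
  let w : Bool → ℝ := fun a => (μ {ω | A ω = a}).toReal
  have hw : ∀ a, w a + w (!a) = 1 := measureReal_eq_add_measureReal_eq_not hA
  have hemb : ∀ a, MeasurableEmbedding (F · a) := fun a =>
    (hFmeas a).measurableEmbedding (hFbij a).1
  have hφCF_eq : φCF = fun ω => fairMixture hemb w φstar (X ω, A ω) := funext fun ω => by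
    rw [hφCF, hX, fairMixture_apply]
  have hq := fairMixture_mem_Ioo hemb w (fun _ => ENNReal.toReal_nonneg) hw hφ01
  have hqm := measurable_fairMixture hemb w hφm
  have hφm' : Measurable fun z : EuclideanSpace ℝ (Fin d) × Bool => φstar z.1 z.2 :=
    measurable_from_prod_countable_left hφm
  have hXm : Measurable X := by
    rw [funext hX]
    exact (measurable_from_prod_countable_left (f := fun z => F z.1 z.2) hFmeas).comp (hU.prodMk hA)
  have hZ : Measurable fun ω => (X ω, A ω) := hXm.prodMk hA
  have hKL := integrable_of_le_neg_log_measureReal_preimage (μ := μ) hA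
    (f := fun ω => binKLDiv (φstar (X ω) (A ω)) (fairMixture hemb w φstar (X ω, A ω)))
    (by unfold binKLDiv; fun_prop) (fun ω => binKLDiv_nonneg (hφ01 _ _) (hq _))
    fun ω hω => binKLDiv_mixture_le (hφ01 _ _) (Ioo_subset_Icc_self (hφ01 _ _)) hω
      ENNReal.toReal_nonneg (hw _)
  subst hφCF_eq
  exact integral_binCrossEntropy_sub_eq_integral_binKLDiv hZ hYm
    (fun ω => by rcases hY01 ω with h | h <;> simp [h]) hφm' (fun z => hφ01 z.1 z.2) hcond
    hqm hq hKL

/-- Excess cross-entropy risk of the optimal counterfactually fair classifier: under the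
invertible structural model with `A ⊥ U` and binary `Y`,
`E[ℓ_CE(φ_CF(X,A), Y)] - E[ℓ_CE(φ*(X,A), Y)] = I(A; Y | U)`, where the conditional mutual
information is `I(A; Y | U) = E_{U,A}[KL(Bernoulli(φ*) ‖ Bernoulli(p(Y=1|U)))]` and
`p(Y=1|U) = π·φ*(x_1,1) + (1-π)·φ*(x_0,0)` is exactly the fair mixture `φ_CF`. -/
theorem excess_cross_entropy_risk_eq_conditional_mutual_information
    {Ω : Type*} [MeasurableSpace Ω] (μ : Measure Ω) [IsProbabilityMeasure μ]
    {k d : ℕ}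
    (U : Ω → EuclideanSpace ℝ (Fin k)) (A : Ω → Bool)
    (hU : Measurable U) (hA : Measurable A)
    (hInd : ProbabilityTheory.IndepFun U A μ)
    (F : EuclideanSpace ℝ (Fin k) → Bool → EuclideanSpace ℝ (Fin d))
    (hFbij : ∀ a, Function.Bijective (F · a))
    (hFmeas : ∀ a, Measurable (F · a))
    (X : Ω → EuclideanSpace ℝ (Fin d)) (hX : ∀ ω, X ω = F (U ω) (A ω))
    (Y : Ω → ℝ) (hYm : Measurable Y) (hY01 : ∀ ω, Y ω = 0 ∨ Y ω = 1)
    (φstar : EuclideanSpace ℝ (Fin d) → Bool → ℝ) (hφm : ∀ a, Measurable (φstar · a))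
    (hφ01 : ∀ x a, φstar x a ∈ Set.Ioo (0 : ℝ) 1)
    (hcond : (fun ω => φstar (X ω) (A ω)) =ᵐ[μ]
      μ[Y | MeasurableSpace.comap (fun ω => (X ω, A ω)) inferInstance])
    (φCF : Ω → ℝ)
    (hφCF : ∀ ω, φCF ω = (μ {ω' | A ω' = A ω}).toReal * φstar (X ω) (A ω)
        + (μ {ω' | A ω' = !(A ω)}).toReal * φstar (F (U ω) (!(A ω))) (!(A ω))) :
    ∫ ω, -(Y ω * Real.log (φCF ω) + (1 - Y ω) * Real.log (1 - φCF ω)) ∂μ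
      - ∫ ω, -(Y ω * Real.log (φstar (X ω) (A ω))
            + (1 - Y ω) * Real.log (1 - φstar (X ω) (A ω))) ∂μ
    = ∫ ω, (φstar (X ω) (A ω) * Real.log (φstar (X ω) (A ω) / φCF ω)
        + (1 - φstar (X ω) (A ω)) * Real.log ((1 - φstar (X ω) (A ω)) / (1 - φCF ω))) ∂μ :=
  excess_cross_entropy_risk_eq_conditional_mutual_information_general μ U A hU hA F hFbij hFmeas X
    hX Y hYm hY01 φstar hφm hφ01 hcond φCF hφCF
end

section
/- The total effect of the plug-in predictor with an estimated counterfactual mechanism is bounded by L·ε: if φ(·, a) is L-Lipschitz in x for each a, the true mechanism G* satisfies G*(G*(x,a,1-a), 1-a, a) = x, and sup over (x,a) of ‖G*(x,a,1-a) - Ĝ(x,a,1-a)‖ ≤ ε, then for the plug-in predictor μ̂(x,a) = P(A=a)φ(x,a) + P(A=1-a)φ(Ĝ(x,a,1-a), 1-a), one has |μ̂(x, a) - μ̂(x_{1-a}, 1-a)| ≤ L·ε for every (x,a), where x_{1-a} = G*(x, a, 1-a); hence TE(μ̂) ≤ L·ε. -/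
open MeasureTheory

/-- Total-effect bound of the plug-in predictor with an estimated counterfactual
mechanism: if `φ(·,a)` is `L`-Lipschitz, the true mechanism `G*` is an involution, and
`‖G*(x,a,1-a) - Ĝ(x,a,1-a)‖ ≤ ε` everywhere, then the plug-in predictor
`μ̂(x,a) = P(A=a)φ(x,a) + P(A=1-a)φ(Ĝ(x,a,1-a), 1-a)` satisfies
`|μ̂(x,a) - μ̂(x_{1-a}, 1-a)| ≤ L·ε` for every `(x,a)`, hence `TE(μ̂) ≤ L·ε`. -/
theorem plugin_predictor_total_effect_bound
    {Ω : Type*} [MeasurableSpace Ω] (μ : Measure Ω) [IsProbabilityMeasure μ]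
    {d : ℕ}
    (X : Ω → EuclideanSpace ℝ (Fin d)) (A : Ω → Bool)
    (hX : Measurable X) (hA : Measurable A)
    (φ : EuclideanSpace ℝ (Fin d) → Bool → ℝ) (hφm : ∀ a, Measurable (φ · a))
    (L ε : ℝ) (hL : 0 ≤ L) (hε : 0 ≤ ε)
    (hLip : ∀ a x x', |φ x a - φ x' a| ≤ L * ‖x - x'‖)
    (Gstar Ghat : EuclideanSpace ℝ (Fin d) → Bool → Bool → EuclideanSpace ℝ (Fin d))
    (hGstarm : Measurable fun p : EuclideanSpace ℝ (Fin d) × Bool × Bool =>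
      Gstar p.1 p.2.1 p.2.2)
    (hGhatm : Measurable fun p : EuclideanSpace ℝ (Fin d) × Bool × Bool =>
      Ghat p.1 p.2.1 p.2.2)
    (hinv : ∀ x a, Gstar (Gstar x a (!a)) (!a) a = x)
    (herr : ∀ x a, ‖Gstar x a (!a) - Ghat x a (!a)‖ ≤ ε)
    (μhat : EuclideanSpace ℝ (Fin d) → Bool → ℝ)
    (hμhat : ∀ x a, μhat x a = (μ {ω | A ω = a}).toReal * φ x a
        + (μ {ω | A ω = !a}).toReal * φ (Ghat x a (!a)) (!a)) :
    (∀ x a, |μhat x a - μhat (Gstar x a (!a)) (!a)| ≤ L * ε) ∧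
    ∫ ω, |μhat (X ω) (A ω) - μhat (Gstar (X ω) (A ω) (!(A ω))) (!(A ω))| ∂μ ≤ L * ε := by
  have key : ∀ x a, |μhat x a - μhat (Gstar x a (!a)) (!a)| ≤ L * ε := by
    intro x a
    set x' := Gstar x a (!a) with hx'
    have h1 := hμhat x a
    have h2 := hμhat x' (!a)
    rw [Bool.not_not] at h2
    set p := (μ {ω | A ω = a}).toReal with hp
    set q := (μ {ω | A ω = !a}).toReal with hq
    have hp0 : 0 ≤ p := ENNReal.toReal_nonneg
    have hq0 : 0 ≤ q := ENNReal.toReal_nonneg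
    have hpq : p + q = 1 := by
      have hcompl : {ω | A ω = !a} = {ω | A ω = a}ᶜ := by
        ext ω; simp [Bool.eq_not_iff]
      have hadd : μ {ω | A ω = a} + μ {ω | A ω = a}ᶜ = 1 := by
        have := measure_add_measure_compl (μ := μ) (hA (measurableSet_singleton a))
        simpa [Set.preimage, measure_univ] using this
      rw [hp, hq, hcompl, ← ENNReal.toReal_add (measure_ne_top _ _) (measure_ne_top _ _),
        hadd, ENNReal.toReal_one]
    -- rewrite difference
    have hdiff : μhat x a - μhat x' (!a)
        = p * (φ x a - φ (Ghat x' (!a) a) a) + q * (φ (Ghat x a (!a)) (!a) - φ x' (!a)) := by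
      rw [h1, h2]; ring
    have hb1 : |φ x a - φ (Ghat x' (!a) a) a| ≤ L * ε := by
      have := hLip a x (Ghat x' (!a) a)
      have hnorm : ‖x - Ghat x' (!a) a‖ ≤ ε := by
        have := herr x' (!a)
        rwa [Bool.not_not, hinv x a] at this
      calc |φ x a - φ (Ghat x' (!a) a) a| ≤ L * ‖x - Ghat x' (!a) a‖ := this
        _ ≤ L * ε := by exact mul_le_mul_of_nonneg_left hnorm hL
    have hb2 : |φ (Ghat x a (!a)) (!a) - φ x' (!a)| ≤ L * ε := by
      have h := hLip (!a) (Ghat x a (!a)) x'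
      have hnorm : ‖Ghat x a (!a) - x'‖ ≤ ε := by
        have := herr x a
        rwa [norm_sub_rev] at this
      calc |φ (Ghat x a (!a)) (!a) - φ x' (!a)| ≤ L * ‖Ghat x a (!a) - x'‖ := h
        _ ≤ L * ε := mul_le_mul_of_nonneg_left hnorm hL
    calc |μhat x a - μhat x' (!a)|
        = |p * (φ x a - φ (Ghat x' (!a) a) a) + q * (φ (Ghat x a (!a)) (!a) - φ x' (!a))| := by
          rw [hdiff]
      _ ≤ |p * (φ x a - φ (Ghat x' (!a) a) a)| + |q * (φ (Ghat x a (!a)) (!a) - φ x' (!a))| :=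
          abs_add_le _ _
      _ = p * |φ x a - φ (Ghat x' (!a) a) a| + q * |φ (Ghat x a (!a)) (!a) - φ x' (!a)| := by
          rw [abs_mul, abs_mul, abs_of_nonneg hp0, abs_of_nonneg hq0]
      _ ≤ p * (L * ε) + q * (L * ε) := by
          gcongr
      _ = L * ε := by rw [← add_mul, hpq, one_mul]
  refine ⟨key, ?_⟩
  set g : Ω → ℝ := fun ω => |μhat (X ω) (A ω) - μhat (Gstar (X ω) (A ω) (!(A ω))) (!(A ω))|
    with hg
  by_cases hi : Integrable g μ
  · calc ∫ ω, g ω ∂μ ≤ ∫ _, L * ε ∂μ :=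
        integral_mono hi (integrable_const _) fun ω => key (X ω) (A ω)
      _ = L * ε := by simp
  · rw [show (∫ ω, g ω ∂μ) = 0 from integral_undef hi]
    positivity
end

section
/- The logit difference bounds the pointwise cross-entropy gap of mixture predictions: for y ∈ {0,1}, probabilities s, ŝ ∈ (0,1) with |log(s/(1-s)) - log(ŝ/(1-ŝ))| ≤ δ, and p ∈ [0,1], the mixtures m = p·r + (1-p)·s and m̂ = p·r + (1-p)·ŝ (with r ∈ (0,1)) satisfy y·log(m/m̂) + (1-y)·log((1-m)/(1-m̂)) ≤ δ. -/
private lemma mix_pos (r s p : ℝ) (hr : 0 < r) (hs : 0 < s)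
    (hp0 : 0 ≤ p) (hp1 : p ≤ 1) : 0 < p * r + (1 - p) * s := by
  have h1 : min r s ≤ r := min_le_left r s
  have h2 : min r s ≤ s := min_le_right r s
  have hmin : 0 < min r s := lt_min hr hs
  nlinarith [mul_nonneg hp0 (sub_nonneg.2 h1),
    mul_nonneg (by linarith : (0:ℝ) ≤ 1 - p) (sub_nonneg.2 h2)]

private lemma aux_log_mix (r s shat p δ : ℝ)
    (hr : 0 < r) (hs0 : 0 < s) (hs1 : s < 1) (hh0 : 0 < shat) (hh1 : shat < 1)
    (hp0 : 0 ≤ p) (hp1 : p ≤ 1)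
    (hδ : Real.log s - Real.log (1 - s) - (Real.log shat - Real.log (1 - shat)) ≤ δ)
    (hδ0 : 0 ≤ δ) :
    Real.log ((p * r + (1 - p) * s) / (p * r + (1 - p) * shat)) ≤ δ := by
  have hm : 0 < p * r + (1 - p) * s := mix_pos r s p hr hs0 hp0 hp1
  have hmh : 0 < p * r + (1 - p) * shat := mix_pos r shat p hr hh0 hp0 hp1
  rcases le_or_gt s shat with h | h
  · have hle : p * r + (1 - p) * s ≤ p * r + (1 - p) * shat := by nlinarith
    have : Real.log ((p * r + (1 - p) * s) / (p * r + (1 - p) * shat)) ≤ 0 :=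
      Real.log_nonpos (by positivity) ((div_le_one hmh).2 hle)
    linarith
  · rw [Real.log_div hm.ne' hmh.ne']
    -- m * shat ≤ m̂ * s
    have hkey : (p * r + (1 - p) * s) * shat ≤ (p * r + (1 - p) * shat) * s := by
      nlinarith [mul_nonneg hp0 hr.le]
    have h1 : Real.log ((p * r + (1 - p) * s) * shat)
        ≤ Real.log ((p * r + (1 - p) * shat) * s) :=
      Real.log_le_log (by positivity) hkey
    rw [Real.log_mul hm.ne' hh0.ne', Real.log_mul hmh.ne' hs0.ne'] at h1
    have h2 : Real.log (1 - s) ≤ Real.log (1 - shat) :=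
      Real.log_le_log (by linarith) (by linarith)
    linarith

/-- The logit difference bounds the pointwise cross-entropy gap of mixture predictions:
for `y ∈ {0,1}`, `s, ŝ ∈ (0,1)` with `|logit(s) - logit(ŝ)| ≤ δ`, `r ∈ (0,1)` and
`p ∈ [0,1]`, the mixtures `m = p·r + (1-p)·s` and `m̂ = p·r + (1-p)·ŝ` satisfy
`y·log(m/m̂) + (1-y)·log((1-m)/(1-m̂)) ≤ δ`. -/
theorem logit_difference_bounds_mixture_cross_entropy_gap
    (r s shat p δ y : ℝ)
    (hr : r ∈ Set.Ioo (0 : ℝ) 1) (hs : s ∈ Set.Ioo (0 : ℝ) 1)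
    (hshat : shat ∈ Set.Ioo (0 : ℝ) 1)
    (hp : p ∈ Set.Icc (0 : ℝ) 1) (hy : y = 0 ∨ y = 1)
    (hδ : |Real.log (s / (1 - s)) - Real.log (shat / (1 - shat))| ≤ δ) :
    y * Real.log ((p * r + (1 - p) * s) / (p * r + (1 - p) * shat))
      + (1 - y) * Real.log ((1 - (p * r + (1 - p) * s)) / (1 - (p * r + (1 - p) * shat)))
    ≤ δ := by
  obtain ⟨hr0, hr1⟩ := hr
  obtain ⟨hs0, hs1⟩ := hs
  obtain ⟨hh0, hh1⟩ := hshat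
  obtain ⟨hp0, hp1⟩ := hp
  have hδ0 : 0 ≤ δ := le_trans (abs_nonneg _) hδ
  rw [Real.log_div hs0.ne' (by linarith : (1 - s) ≠ 0),
    Real.log_div hh0.ne' (by linarith : (1 - shat) ≠ 0)] at hδ
  have hub := le_of_abs_le hδ
  have hlb := neg_le_of_abs_le hδ
  rcases hy with h | h
  · subst h
    have h1 : (1 - (p * r + (1 - p) * s)) = p * (1 - r) + (1 - p) * (1 - s) := by ring
    have h2 : (1 - (p * r + (1 - p) * shat)) = p * (1 - r) + (1 - p) * (1 - shat) := by ring
    rw [h1, h2]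
    have := aux_log_mix (1 - r) (1 - s) (1 - shat) p δ (by linarith) (by linarith)
      (by linarith) (by linarith) (by linarith) hp0 hp1
      (by rw [show (1:ℝ) - (1 - s) = s by ring, show (1:ℝ) - (1 - shat) = shat by ring]
          linarith) hδ0
    simpa using this
  · subst h
    have := aux_log_mix r s shat p δ hr0 hs0 hs1 hh0 hh1 hp0 hp1 (by linarith) hδ0
    simpa using this
end
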